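/- arXiv:2506.01747 — 2 statements merged into one kernel-verified Lean document; each statement's English description precedes it below -/
import Mathlib

section
/- Let n be a positive integer and let x ∈ (ZMod 2)^n be a vector of Hamming weight a. For all integers j and b with 0 ≤ j ≤ n and 0 ≤ b ≤ n, the number of vectors z ∈ (ZMod 2)^n with Hamming weight w(z) = j such that w(x + z) = b equals N(a, j, b); that is, it equals binom(a,u)·binom(n−a, j−u) when a + j − b = 2u for some integer u with 0 ≤ u ≤ min(a,j), and it equals 0 when no such u exists. -/
/-- `Ncoef n a j b` is the quantity `N(a,j,b)` from the paper:
`binom(a,u) * binom(n-a, j-u)` when `a + j - b = 2u` for some integer `u` with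
`0 ≤ u ≤ min a j`, and `0` when no such `u` exists. -/
def Ncoef (n a j b : ℕ) : ℕ :=
  if b ≤ a + j ∧ 2 ∣ (a + j - b) ∧ (a + j - b) / 2 ≤ min a j then
    Nat.choose a ((a + j - b) / 2) * Nat.choose (n - a) (j - (a + j - b) / 2)
  else 0

open Finset

/-- Count subsets of a fintype with prescribed size and prescribed intersection
size with a fixed set `A`. -/
lemma count_inter {α : Type*} [Fintype α] [DecidableEq α] (A : Finset α) (u j : ℕ)
    (hu : u ≤ j) :
    (univ.filter fun S : Finset α => S.card = j ∧ (A ∩ S).card = u).card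
      = A.card.choose u * (Fintype.card α - A.card).choose (j - u) := by
  rw [← Finset.card_compl, ← Finset.card_powersetCard u A,
    ← Finset.card_powersetCard (j - u) Aᶜ, ← Finset.card_product]
  refine Finset.card_bij' (fun S _ => (S ∩ A, S \ A))
    (fun p _ => p.1 ∪ p.2) ?_ ?_ ?_ ?_
  · intro S hS
    simp only [mem_filter, mem_univ, true_and] at hS
    obtain ⟨hSj, hSu⟩ := hS
    have h1 : (S ∩ A).card + (S \ A).card = S.card := Finset.card_inter_add_card_sdiff S A
    simp only [mem_product, mem_powersetCard]
    refine ⟨⟨Finset.inter_subset_right, by rwa [Finset.inter_comm]⟩,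
      ⟨fun i hi => ?_, ?_⟩⟩
    · simp only [mem_compl]
      exact (Finset.mem_sdiff.mp hi).2
    · rw [Finset.inter_comm] at hSu
      omega
  · intro p hp
    simp only [mem_product, mem_powersetCard] at hp
    obtain ⟨⟨h1A, h1c⟩, h2A, h2c⟩ := hp
    have hdisj : Disjoint p.1 p.2 := by
      refine Finset.disjoint_left.mpr fun i hi1 hi2 => ?_
      exact (Finset.mem_compl.mp (h2A hi2)) (h1A hi1)
    have hAint : A ∩ (p.1 ∪ p.2) = p.1 := by
      rw [Finset.inter_union_distrib_left]
      have : A ∩ p.1 = p.1 := Finset.inter_eq_right.mpr h1A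
      have h2 : A ∩ p.2 = ∅ := by
        refine Finset.eq_empty_of_forall_notMem fun i hi => ?_
        rcases Finset.mem_inter.mp hi with ⟨hiA, hi2⟩
        exact (Finset.mem_compl.mp (h2A hi2)) hiA
      rw [this, h2, Finset.union_empty]
    simp only [mem_filter, mem_univ, true_and]
    constructor
    · rw [Finset.card_union_of_disjoint hdisj, h1c, h2c]; omega
    · rw [hAint, h1c]
  · intro S hS
    ext i
    simp only [Finset.mem_union, Finset.mem_inter, Finset.mem_sdiff]
    tauto
  · intro p hp
    simp only [mem_product, mem_powersetCard] at hp
    obtain ⟨⟨h1A, _⟩, h2A, _⟩ := hp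
    have h1 : (p.1 ∪ p.2) ∩ A = p.1 := by
      rw [Finset.union_inter_distrib_right]
      have e1 : p.1 ∩ A = p.1 := Finset.inter_eq_left.mpr h1A
      have e2 : p.2 ∩ A = ∅ := by
        refine Finset.eq_empty_of_forall_notMem fun i hi => ?_
        rcases Finset.mem_inter.mp hi with ⟨hi2, hiA⟩
        exact (Finset.mem_compl.mp (h2A hi2)) hiA
      rw [e1, e2, Finset.union_empty]
    have h2 : (p.1 ∪ p.2) \ A = p.2 := by
      ext i
      simp only [Finset.mem_sdiff, Finset.mem_union]
      constructor
      · rintro ⟨hi | hi, hiA⟩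
        · exact absurd (h1A hi) hiA
        · exact hi
      · intro hi
        exact ⟨Or.inr hi, Finset.mem_compl.mp (h2A hi)⟩
    simp [h1, h2]

/-- Cardinality of symmetric difference. -/
lemma card_symmDiff' {α : Type*} [DecidableEq α] (A S : Finset α) :
    (symmDiff A S).card + 2 * (A ∩ S).card = A.card + S.card := by
  have h : symmDiff A S = (A \ S) ∪ (S \ A) := by
    ext i; simp only [Finset.mem_symmDiff, Finset.mem_union, Finset.mem_sdiff]
  have hd : Disjoint (A \ S) (S \ A) := by
    refine Finset.disjoint_left.mpr fun i hi1 hi2 => ?_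
    exact (Finset.mem_sdiff.mp hi1).2 (Finset.mem_sdiff.mp hi2).1
  have h1 : (A \ S).card + (A ∩ S).card = A.card := Finset.card_sdiff_add_card_inter A S
  have h2 : (S \ A).card + (S ∩ A).card = S.card := Finset.card_sdiff_add_card_inter S A
  rw [Finset.inter_comm] at h2
  rw [h, Finset.card_union_of_disjoint hd]
  omega

/-- The subset-level statement. -/
lemma subset_count (n a j b : ℕ) (A : Finset (Fin n)) (hA : A.card = a) :
    (univ.filter fun S : Finset (Fin n) =>
      S.card = j ∧ (symmDiff A S).card = b).card = Ncoef n a j b := by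
  have key : ∀ S : Finset (Fin n), (A ∩ S).card ≤ min a j ∨ ¬ S.card = j := by
    intro S
    by_cases h : S.card = j
    · left
      have h1 : (A ∩ S).card ≤ a := hA ▸ Finset.card_le_card Finset.inter_subset_left
      have h2 : (A ∩ S).card ≤ j := h ▸ Finset.card_le_card Finset.inter_subset_right
      omega
    · right; exact h
  unfold Ncoef
  split_ifs with hcond
  · obtain ⟨hba, hdvd, hmin⟩ := hcond
    set u := (a + j - b) / 2 with hu
    have h2u : 2 * u = a + j - b := by omega
    have huj : u ≤ j := by omega
    have : (univ.filter fun S : Finset (Fin n) =>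
        S.card = j ∧ (symmDiff A S).card = b)
        = (univ.filter fun S : Finset (Fin n) => S.card = j ∧ (A ∩ S).card = u) := by
      ext S
      simp only [mem_filter, mem_univ, true_and]
      have hc := card_symmDiff' A S
      rw [hA] at hc
      constructor
      · rintro ⟨hSj, hSb⟩
        rw [hSj] at hc
        exact ⟨hSj, by omega⟩
      · rintro ⟨hSj, hSu⟩
        rw [hSj, hSu] at hc
        exact ⟨hSj, by omega⟩
    rw [this, count_inter A u j huj, hA, Fintype.card_fin]
  · refine Finset.card_eq_zero.mpr (Finset.filter_eq_empty_iff.mpr fun S _ => ?_)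
    rintro ⟨hSj, hSb⟩
    have hc := card_symmDiff' A S
    rw [hA, hSj, hSb] at hc
    rcases key S with hk | hk
    · exact hcond ⟨by omega, by omega, by omega⟩
    · exact hk hSj

lemma zmod2_add_ne (p q : ZMod 2) : p + q ≠ 0 ↔ ((p ≠ 0) ↔ ¬ (q ≠ 0)) := by
  revert p q; decide

lemma zmod2_ind (c : ZMod 2) : (if c ≠ 0 then (1 : ZMod 2) else 0) = c := by
  revert c; decide

/-- for `x` of Hamming weight `a`, the number of vectors `z` of
Hamming weight `j` with `w(x + z) = b` equals `N(a, j, b)`. -/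
theorem stmt0 (n : ℕ) (hn : 0 < n) (x : Fin n → ZMod 2) (a : ℕ)
    (ha : hammingNorm x = a) (j b : ℕ) (hj : j ≤ n) (hb : b ≤ n) :
    (Finset.univ.filter (fun z : Fin n → ZMod 2 =>
        hammingNorm z = j ∧ hammingNorm (x + z) = b)).card = Ncoef n a j b := by
  set A : Finset (Fin n) := univ.filter (fun i => x i ≠ 0) with hAdef
  have hA : A.card = a := ha
  rw [← subset_count n a j b A hA]
  have hsupp : ∀ z : Fin n → ZMod 2,
      univ.filter (fun i => (x + z) i ≠ 0) = symmDiff A (univ.filter (fun i => z i ≠ 0)) := by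
    intro z
    ext i
    simp only [hAdef, Finset.mem_symmDiff, mem_filter, mem_univ, true_and, Pi.add_apply]
    rw [zmod2_add_ne]
    tauto
  refine Finset.card_bij' (fun z _ => univ.filter (fun i => z i ≠ 0))
    (fun S _ => fun i => if i ∈ S then (1 : ZMod 2) else 0) ?_ ?_ ?_ ?_
  · intro z hz
    simp only [mem_filter, mem_univ, true_and] at hz ⊢
    refine ⟨hz.1, ?_⟩
    rw [← hsupp z]
    exact hz.2
  · intro S hS
    simp only [mem_filter, mem_univ, true_and] at hS ⊢
    set z : Fin n → ZMod 2 := fun i => if i ∈ S then (1 : ZMod 2) else 0 with hzdef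
    have hzS : univ.filter (fun i => z i ≠ 0) = S := by
      ext i
      simp only [mem_filter, mem_univ, true_and, hzdef]
      by_cases h : i ∈ S <;> simp [h]
    constructor
    · show hammingNorm z = j
      unfold hammingNorm
      rw [show ({i | z i ≠ 0} : Finset (Fin n)) = univ.filter (fun i => z i ≠ 0) from rfl,
        hzS]
      exact hS.1
    · show hammingNorm (x + z) = b
      unfold hammingNorm
      rw [show ({i | (x + z) i ≠ 0} : Finset (Fin n))
          = univ.filter (fun i => (x + z) i ≠ 0) from rfl, hsupp z, hzS]
      exact hS.2
  · intro z _
    funext i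
    simp only [mem_filter, mem_univ, true_and]
    exact zmod2_ind (z i)
  · intro S _
    ext i
    simp only [mem_filter, mem_univ, true_and]
    by_cases h : i ∈ S <;> simp [h]
end

section
/- (Proposition 1: error probabilities of the quantization scheme in the asymmetric setup with p0 = p1 = 1/2.) Let n be a positive integer, let S be a nonempty finite subset of (ZMod 2)^n (the decision region, i.e., coset-leader set, of the all-zero codeword of the quantizer), let N_0 = |S| and E_γ = #{x ∈ S : w(x) = γ} for 0 ≤ γ ≤ n. Let X be uniformly distributed on S, and under hypothesis H_h (h ∈ {0,1}) let Z be an independent random vector in (ZMod 2)^n with i.i.d. components each equal to 1 with probability c_h ∈ (0,1); set Y = X + Z. The decoder declares H_0 if and only if w(Y) ≤ λ_q, for a fixed integer threshold λ_q with 0 ≤ λ_q ≤ n. Then the Type-I error probability α = P(w(Y) > λ_q | H_0) and Type-II error probability β = P(w(Y) ≤ λ_q | H_1) satisfy α = 1 − (1/N_0) Σ_{λ=0}^{λ_q} Σ_{γ=0}^{n} Σ_{j=0}^{n} E_γ · N(γ, j, λ) · c_0^j (1−c_0)^{n−j} and β = (1/N_0) Σ_{λ=0}^{λ_q} Σ_{γ=0}^{n}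 Σ_{j=0}^{n} E_γ · N(γ, j, λ) · c_1^j (1−c_1)^{n−j}. -/
open Finset
open scoped symmDiff

namespace Finset

variable {α : Type*} [DecidableEq α]

lemma card_symmDiff_add_two_mul_card_inter (s t : Finset α) :
    #(s ∆ t) + 2 * #(s ∩ t) = #s + #t := by
  rw [symmDiff_eq_sup_sdiff_inf, sup_eq_union, inf_eq_inter,
    card_sdiff_of_subset inter_subset_union]
  have := card_union_add_card_inter s t
  have := card_le_card (inter_subset_union (s := s) (t := t))
  omega

variable [Fintype α]

lemma card_filter_card_inter_eq_card_sdiff_eq (s : Finset α) (u v : ℕ) :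
    #{t : Finset α | #(t ∩ s) = u ∧ #(t \ s) = v}
      = (#s).choose u * (Fintype.card α - #s).choose v := by
  have split_union {p q : Finset α} (hp : p ⊆ s) (hq : q ⊆ sᶜ) :
      (p ∪ q) ∩ s = p ∧ (p ∪ q) \ s = q := by
    constructor <;> ext i <;> have := @hp i <;> have := @hq i <;> simp at * <;> tauto
  rw [← card_compl, ← card_powersetCard u s, ← card_powersetCard v sᶜ, ← card_product]
  refine card_nbij' (fun t ↦ (t ∩ s, t \ s)) (fun pq ↦ pq.1 ∪ pq.2) ?_ ?_ ?_ ?_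
  · intro t ht
    simp only [coe_filter, mem_univ, true_and, Set.mem_ofPred_eq] at ht
    simp only [coe_product, Set.mem_prod, mem_coe, mem_powersetCard]
    exact ⟨⟨inter_subset_right, ht.1⟩, fun i hi ↦ by simp_all, ht.2⟩
  · rintro ⟨p, q⟩ hpq
    simp only [coe_product, Set.mem_prod, mem_coe, mem_powersetCard] at hpq
    obtain ⟨hp, hq⟩ := split_union hpq.1.1 hpq.2.1
    simp [hp, hq, hpq.1.2, hpq.2.2]
  · intro t _
    exact (union_comm _ _).trans (sdiff_union_inter t s)
  · rintro ⟨p, q⟩ hpq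
    simp only [coe_product, Set.mem_prod, mem_coe, mem_powersetCard] at hpq
    obtain ⟨hp, hq⟩ := split_union hpq.1.1 hpq.2.1
    simp [hp, hq]

lemma card_filter_card_eq_card_symmDiff_eq (s : Finset α) (j l : ℕ) :
    #{t : Finset α | #t = j ∧ #(s ∆ t) = l} = Ncoef (Fintype.card α) #s j l := by
  have card_split (t : Finset α) := card_inter_add_card_sdiff t s
  have card_symmDiff (t : Finset α) := inter_comm s t ▸ card_symmDiff_add_two_mul_card_inter s t
  have card_inter_le (t : Finset α) := card_le_card (inter_subset_right (s₁ := t) (s₂ := s))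
  unfold Ncoef
  split_ifs with h
  · rw [← card_filter_card_inter_eq_card_sdiff_eq]
    congr 1
    refine filter_congr fun t _ ↦ ?_
    have := card_split t; have := card_symmDiff t; have := card_inter_le t
    omega
  · refine card_eq_zero.2 (filter_eq_empty_iff.2 fun t _ ht ↦ h ?_)
    have := card_split t; have := card_symmDiff t; have := card_inter_le t
    omega

end Finset

lemma sum_comp_hammingNorm {ι : Type*} [Fintype ι] {β : ι → Type*} [∀ i, DecidableEq (β i)]
    [∀ i, Zero (β i)] {M : Type*} [AddCommMonoid M] (S : Finset (∀ i, β i)) (f : ℕ → M) :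
    ∑ x ∈ S, f (hammingNorm x)
      = ∑ γ ∈ range (Fintype.card ι + 1), #{x ∈ S | hammingNorm x = γ} • f γ := by
  rw [← sum_fiberwise_of_maps_to (g := hammingNorm) (t := range (Fintype.card ι + 1))
    (fun x _ ↦ by simpa [Nat.lt_succ_iff] using hammingNorm_le_card_fintype)]
  refine sum_congr rfl fun γ _ ↦ ?_
  rw [sum_congr rfl fun x hx ↦ by rw [(mem_filter.1 hx).2], sum_const]

variable {R : Type*} [CommRing R]

def acceptProb (n γ lq : ℕ) (c : R) : R :=
  ∑ l ∈ range (lq + 1), ∑ j ∈ range (n + 1), (Ncoef n γ j l : R) * c ^ j * (1 - c) ^ (n - j)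

section BinaryVectors

variable {ι : Type*} [Fintype ι] [DecidableEq ι]

def supportEquiv : (ι → ZMod 2) ≃ Finset ι where
  toFun x := {i | x i ≠ 0}
  invFun s i := if i ∈ s then 1 else 0
  left_inv x := funext fun i ↦ by
    have : ∀ a : ZMod 2, (if a ≠ 0 then 1 else 0) = a := by decide
    simpa using this (x i)
  right_inv s := by ext i; simp

lemma hammingNorm_eq_card_supportEquiv (x : ι → ZMod 2) :
    hammingNorm x = #(supportEquiv x) := rfl

lemma supportEquiv_add (x z : ι → ZMod 2) :
    supportEquiv (x + z) = supportEquiv x ∆ supportEquiv z := by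
  ext i
  have : ∀ a b : ZMod 2, a + b ≠ 0 ↔ (a ≠ 0 ∧ b = 0 ∨ b ≠ 0 ∧ a = 0) := by decide
  simp [supportEquiv, mem_symmDiff, this]

lemma card_filter_hammingNorm_eq_and_hammingNorm_add_eq (x : ι → ZMod 2) (j l : ℕ) :
    #{z : ι → ZMod 2 | hammingNorm z = j ∧ hammingNorm (x + z) = l}
      = Ncoef (Fintype.card ι) (hammingNorm x) j l := by
  rw [hammingNorm_eq_card_supportEquiv, ← card_filter_card_eq_card_symmDiff_eq]
  refine card_equiv supportEquiv fun z ↦ ?_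
  simp [hammingNorm_eq_card_supportEquiv, supportEquiv_add]

lemma sum_pow_hammingNorm_mul_one_sub_pow_eq_one (c : R) :
    ∑ z : ι → ZMod 2, c ^ hammingNorm z * (1 - c) ^ (Fintype.card ι - hammingNorm z) = 1 := by
  refine (supportEquiv.sum_comp fun s ↦ c ^ #s * (1 - c) ^ (Fintype.card ι - #s)).trans ?_
  rw [Fintype.sum_pow_mul_eq_add_pow, add_sub_cancel, one_pow]

lemma sum_ite_hammingNorm_add_le (x : ι → ZMod 2) (c : R) (lq : ℕ) :
    ∑ z : ι → ZMod 2, (if hammingNorm (x + z) ≤ lq then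
        c ^ hammingNorm z * (1 - c) ^ (Fintype.card ι - hammingNorm z) else 0)
      = acceptProb (Fintype.card ι) (hammingNorm x) lq c := by
  rw [← sum_filter, ← sum_fiberwise_of_maps_to (g := fun z ↦ hammingNorm (x + z))
    (t := range (lq + 1)) (by simp)]
  refine sum_congr rfl fun l hl ↦ ?_
  rw [← sum_fiberwise_of_maps_to (g := hammingNorm) (t := range (Fintype.card ι + 1))
    (fun z _ ↦ by simpa [Nat.lt_succ_iff] using hammingNorm_le_card_fintype)]
  refine sum_congr rfl fun j _ ↦ ?_
  rw [sum_congr rfl fun z hz ↦ by rw [(mem_filter.1 hz).2], sum_const, nsmul_eq_mul, mul_assoc,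
    filter_filter, filter_filter, ← card_filter_hammingNorm_eq_and_hammingNorm_add_eq]
  congr 3
  refine filter_congr fun z _ ↦ ?_
  have := mem_range.1 hl
  omega

lemma sum_ite_lt_hammingNorm_add (x : ι → ZMod 2) (c : R) (lq : ℕ) :
    ∑ z : ι → ZMod 2, (if lq < hammingNorm (x + z) then
        c ^ hammingNorm z * (1 - c) ^ (Fintype.card ι - hammingNorm z) else 0)
      = 1 - acceptProb (Fintype.card ι) (hammingNorm x) lq c := by
  rw [← sum_ite_hammingNorm_add_le, eq_sub_iff_add_eq, ← sum_add_distrib]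
  refine (sum_congr rfl fun z _ ↦ ?_).trans (sum_pow_hammingNorm_mul_one_sub_pow_eq_one c)
  split_ifs <;> first | omega | simp

end BinaryVectors

lemma sum_acceptProb_hammingNorm {ι : Type*} [Fintype ι] (S : Finset (ι → ZMod 2)) (c : R)
    (lq : ℕ) :
    ∑ x ∈ S, acceptProb (Fintype.card ι) (hammingNorm x) lq c
      = ∑ l ∈ range (lq + 1), ∑ γ ∈ range (Fintype.card ι + 1), ∑ j ∈ range (Fintype.card ι + 1),
          (#{x ∈ S | hammingNorm x = γ} : R) * Ncoef (Fintype.card ι) γ j l * c ^ j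
            * (1 - c) ^ (Fintype.card ι - j) := by
  rw [sum_comp_hammingNorm S fun γ ↦ acceptProb (Fintype.card ι) γ lq c, sum_comm]
  simp only [acceptProb, nsmul_eq_mul, mul_sum, mul_assoc]

theorem stmt3_general (n : ℕ) (S : Finset (Fin n → ZMod 2)) (hS : S.Nonempty)
    (c0 c1 : ℝ) (lq : ℕ) :
    ((1 / (S.card : ℝ)) * ∑ x ∈ S, ∑ z : Fin n → ZMod 2,
        (if lq < hammingNorm (x + z) then
          c0 ^ hammingNorm z * (1 - c0) ^ (n - hammingNorm z) else 0))
      = 1 - (1 / (S.card : ℝ)) *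
          ∑ lam ∈ Finset.range (lq + 1), ∑ γ ∈ Finset.range (n + 1),
            ∑ j ∈ Finset.range (n + 1),
              ((S.filter (fun x => hammingNorm x = γ)).card : ℝ) *
                (Ncoef n γ j lam : ℝ) * c0 ^ j * (1 - c0) ^ (n - j)
    ∧ ((1 / (S.card : ℝ)) * ∑ x ∈ S, ∑ z : Fin n → ZMod 2,
        (if hammingNorm (x + z) ≤ lq then
          c1 ^ hammingNorm z * (1 - c1) ^ (n - hammingNorm z) else 0))
      = (1 / (S.card : ℝ)) *
          ∑ lam ∈ Finset.range (lq + 1), ∑ γ ∈ Finset.range (n + 1),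
            ∑ j ∈ Finset.range (n + 1),
              ((S.filter (fun x => hammingNorm x = γ)).card : ℝ) *
                (Ncoef n γ j lam : ℝ) * c1 ^ j * (1 - c1) ^ (n - j) := by
  have hS_card : (#S : ℝ) ≠ 0 := by exact_mod_cast hS.card_pos.ne'
  have average (c : ℝ) := Fintype.card_fin n ▸ sum_acceptProb_hammingNorm S c lq
  refine ⟨?_, ?_⟩
  · have reject (x : Fin n → ZMod 2) := Fintype.card_fin n ▸ sum_ite_lt_hammingNorm_add x c0 lq
    rw [sum_congr rfl fun x _ ↦ reject x, sum_sub_distrib, sum_const, nsmul_one, average, mul_sub,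
      one_div, inv_mul_cancel₀ hS_card]
  · have accept (x : Fin n → ZMod 2) := Fintype.card_fin n ▸ sum_ite_hammingNorm_add_le x c1 lq
    rw [sum_congr rfl fun x _ ↦ accept x, average]

/-- Proposition 1: in the asymmetric quantization scheme with
`p0 = p1 = 1/2`, with `X` uniform on the coset-leader set `S` (`N_0 = |S|`,
`E_γ = #{x ∈ S : w(x) = γ}`), noise `Z` i.i.d. Bernoulli(`c_h`) under `H_h`,
`Y = X + Z`, and the test declaring `H_0` iff `w(Y) ≤ λ_q`:
`α = 1 - (1/N_0) Σ_{λ=0}^{λ_q} Σ_{γ=0}^n Σ_{j=0}^n E_γ N(γ,j,λ) c_0^j (1-c_0)^{n-j}` and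
`β = (1/N_0) Σ_{λ=0}^{λ_q} Σ_{γ=0}^n Σ_{j=0}^n E_γ N(γ,j,λ) c_1^j (1-c_1)^{n-j}`. -/
theorem stmt3 (n : ℕ) (hn : 0 < n) (S : Finset (Fin n → ZMod 2)) (hS : S.Nonempty)
    (c0 c1 : ℝ) (hc0 : c0 ∈ Set.Ioo (0 : ℝ) 1) (hc1 : c1 ∈ Set.Ioo (0 : ℝ) 1)
    (lq : ℕ) (hlq : lq ≤ n) :
    ((1 / (S.card : ℝ)) * ∑ x ∈ S, ∑ z : Fin n → ZMod 2,
        (if lq < hammingNorm (x + z) then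
          c0 ^ hammingNorm z * (1 - c0) ^ (n - hammingNorm z) else 0))
      = 1 - (1 / (S.card : ℝ)) *
          ∑ lam ∈ Finset.range (lq + 1), ∑ γ ∈ Finset.range (n + 1),
            ∑ j ∈ Finset.range (n + 1),
              ((S.filter (fun x => hammingNorm x = γ)).card : ℝ) *
                (Ncoef n γ j lam : ℝ) * c0 ^ j * (1 - c0) ^ (n - j)
    ∧ ((1 / (S.card : ℝ)) * ∑ x ∈ S, ∑ z : Fin n → ZMod 2,
        (if hammingNorm (x + z) ≤ lq then
          c1 ^ hammingNorm z * (1 - c1) ^ (n - hammingNorm z) else 0))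
      = (1 / (S.card : ℝ)) *
          ∑ lam ∈ Finset.range (lq + 1), ∑ γ ∈ Finset.range (n + 1),
            ∑ j ∈ Finset.range (n + 1),
              ((S.filter (fun x => hammingNorm x = γ)).card : ℝ) *
                (Ncoef n γ j lam : ℝ) * c1 ^ j * (1 - c1) ^ (n - j) :=
  stmt3_general n S hS c0 c1 lq
end
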